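/- Let G be a finite group of order 2n with n ≥ 2 and S a generating set such that the undirected Cayley graph Γ(G,S) is complete bipartite. Then Player 1 has a winning strategy for RAV(G,S). -/
import Mathlib


namespace RelatorGames

variable {G : Type*} [Group G]

/-- The letters available in the relator games: elements of `S` and their inverses. -/
def letters (S : Set G) : Set G := S ∪ (fun g => g⁻¹) '' S

/-- Evaluate a history of moves (most recent letter first) to a group element:
the group element represented by the word built so far. -/
def eval (h : List G) : G := h.reverse.prod

/-- A move `m` is legal after history `h`: it is a letter of `S ∪ S⁻¹` and it is not
the inverse of the immediately preceding letter (no backtracking). -/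
def LegalMove (S : Set G) (h : List G) (m : G) : Prop :=
  m ∈ letters S ∧ ∀ p ∈ h.head?, m ≠ p⁻¹

/-- Appending `m` to the history `h` produces a word equal in `G` to some earlier
prefix of the word (equivalently, the walk in the Cayley graph revisits a vertex). -/
def ClosesCycle (h : List G) (m : G) : Prop :=
  ∃ t, t <:+ h ∧ eval t = eval (m :: h)

/-- A strategy: a choice of next letter given the history (most recent letter first). -/
abbrev Strategy (G : Type*) := List G → G

/-- The sequence of histories arising when the first player (moving at even steps)
uses `σ` and the second player (moving at odd steps) uses `τ`. -/
def hist (σ τ : Strategy G) : ℕ → List G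
  | 0 => []
  | k + 1 =>
      (if k % 2 = 0 then σ (hist σ τ k) else τ (hist σ τ k)) :: hist σ τ k

/-- The move made at step `k` in the play of `σ` against `τ`. -/
def moveAt (σ τ : Strategy G) (k : ℕ) : G :=
  if k % 2 = 0 then σ (hist σ τ k) else τ (hist σ τ k)

/-- Step `j` is uneventful: the move made is legal and does not close a cycle. -/
def Ok (S : Set G) (σ τ : Strategy G) (j : ℕ) : Prop :=
  LegalMove S (hist σ τ j) (moveAt σ τ j) ∧ ¬ ClosesCycle (hist σ τ j) (moveAt σ τ j)

/-- In the play of `σ` against `τ`, the player moving at steps congruent to `p` mod 2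
wins the relator achievement game `REL(G,S)`: at the first eventful step, either it is
that player's turn and they legally close a cycle, or it is the opponent's turn and the
opponent has made an illegal move (in particular, has no legal move). -/
def RelWins (S : Set G) (p : ℕ) (σ τ : Strategy G) : Prop :=
  ∃ k : ℕ, (∀ j < k, Ok S σ τ j) ∧
    ((k % 2 = p ∧ LegalMove S (hist σ τ k) (moveAt σ τ k) ∧
        ClosesCycle (hist σ τ k) (moveAt σ τ k)) ∨
      (k % 2 ≠ p ∧ ¬ LegalMove S (hist σ τ k) (moveAt σ τ k)))

/-- In the play of `σ` against `τ`, the player moving at steps congruent to `p` mod 2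
wins the relator avoidance game `RAV(G,S)`: at the first eventful step it is the
opponent's turn, and the opponent either makes an illegal move (in particular, has no
legal move) or closes a cycle. -/
def RavWins (S : Set G) (p : ℕ) (σ τ : Strategy G) : Prop :=
  ∃ k : ℕ, (∀ j < k, Ok S σ τ j) ∧ k % 2 ≠ p ∧
    (¬ LegalMove S (hist σ τ k) (moveAt σ τ k) ∨ ClosesCycle (hist σ τ k) (moveAt σ τ k))

/-- Player 1 has a winning strategy for `REL(G,S)`. -/
def FirstWinsREL (S : Set G) : Prop :=
  ∃ σ : Strategy G, ∀ τ : Strategy G, RelWins S 0 σ τ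

/-- Player 2 has a winning strategy for `REL(G,S)`. -/
def SecondWinsREL (S : Set G) : Prop :=
  ∃ τ : Strategy G, ∀ σ : Strategy G, RelWins S 1 σ τ

/-- Player 1 has a winning strategy for `RAV(G,S)`. -/
def FirstWinsRAV (S : Set G) : Prop :=
  ∃ σ : Strategy G, ∀ τ : Strategy G, RavWins S 0 σ τ

/-- Player 2 has a winning strategy for `RAV(G,S)`. -/
def SecondWinsRAV (S : Set G) : Prop :=
  ∃ τ : Strategy G, ∀ σ : Strategy G, RavWins S 1 σ τ

end RelatorGames

namespace RavAux
open RelatorGames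

variable {G : Type*} [Group G]

lemma eval_cons (m : G) (h : List G) : eval (m :: h) = eval h * m := by
  simp [eval]

lemma hist_succ (σ τ : Strategy G) (k : ℕ) :
    hist σ τ (k + 1) = moveAt σ τ k :: hist σ τ k := rfl

lemma eval_hist_succ (σ τ : Strategy G) (k : ℕ) :
    eval (hist σ τ (k + 1)) = eval (hist σ τ k) * moveAt σ τ k := by
  rw [hist_succ, eval_cons]

lemma hist_suffix (σ τ : Strategy G) {i j : ℕ} (hij : i ≤ j) :
    hist σ τ i <:+ hist σ τ j := by
  induction j with
  | zero =>
    have : i = 0 := Nat.le_zero.mp hij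
    subst this; exact List.suffix_rfl
  | succ j ih =>
    rcases Nat.lt_or_ge i (j + 1) with h | h
    · exact (ih (Nat.lt_succ_iff.mp h)).trans (by rw [hist_succ]; exact List.suffix_cons _ _)
    · have : i = j + 1 := le_antisymm hij h
      subst this; exact List.suffix_rfl

lemma suffix_eq_hist (σ τ : Strategy G) :
    ∀ j, ∀ t, t <:+ hist σ τ j → ∃ i ≤ j, t = hist σ τ i := by
  intro j
  induction j with
  | zero =>
    intro t ht
    have : t = [] := List.suffix_nil.mp ht
    exact ⟨0, le_refl 0, this⟩
  | succ j ih =>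
    intro t ht
    rw [hist_succ, List.suffix_cons_iff] at ht
    rcases ht with h | h
    · exact ⟨j + 1, le_refl _, by rw [h, hist_succ]⟩
    · obtain ⟨i, hi, rfl⟩ := ih t h
      exact ⟨i, Nat.le_succ_of_le hi, rfl⟩

lemma letters_compl (H : Subgroup G) :
    letters {g : G | g ∉ H} = {g : G | g ∉ H} := by
  ext g
  simp only [letters, Set.mem_union, Set.mem_image, Set.mem_setOf_eq]
  constructor
  · rintro (h | ⟨x, hx, rfl⟩)
    · exact h
    · intro hc; exact hx (by simpa using hc)
  · exact fun h => Or.inl h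

open Classical in
noncomputable def good (S : Set G) : Strategy G := fun h =>
  if hx : ∃ m, m ∈ S ∧ ∀ t, t <:+ h → eval t ≠ eval (m :: h) then hx.choose else 1

lemma good_spec {S : Set G} {h : List G}
    (hx : ∃ m, m ∈ S ∧ ∀ t, t <:+ h → eval t ≠ eval (m :: h)) :
    good S h ∈ S ∧ ∀ t, t <:+ h → eval t ≠ eval (good S h :: h) := by
  simp only [good]
  rw [dif_pos hx]
  exact hx.choose_spec

lemma card_filter_mod (r : ℕ) (hr : r < 2) (k : ℕ) :
    ((Finset.range k).filter (fun j => j % 2 = r)).card = (k + 1 - r) / 2 := by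
  induction k with
  | zero => simp; omega
  | succ k ih =>
    rw [Finset.range_add_one, Finset.filter_insert]
    by_cases h : k % 2 = r
    · rw [if_pos h, Finset.card_insert_of_notMem (by simp), ih]; omega
    · rw [if_neg h, ih]; omega

end RavAux


open RelatorGames RavAux in
/-- If `G` has order `2n` with `n ≥ 2` and `S = G \\ H` for an index-2
subgroup `H` (so the Cayley graph is complete bipartite), then Player 1 wins
`RAV(G,S)`. -/
theorem rav_complete_bipartite_first_wins {G : Type*} [Group G] [Fintype G]
    (n : ℕ) (hn : 2 ≤ n) (hcard : Fintype.card G = 2 * n)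
    (S : Set G) (hgen : Subgroup.closure S = ⊤)
    (H : Subgroup G) (hH : H.index = 2) (hS : S = {g : G | g ∉ H}) :
    FirstWinsRAV S := by
  classical
  subst hS
  set S : Set G := {g : G | g ∉ H} with hSdef
  refine ⟨good S, fun τ => ?_⟩
  set σ : Strategy G := good S with hσ
  set v : ℕ → G := fun j => eval (hist σ τ j) with hv
  -- cardinality of H
  have cardH : Nat.card (↥H) = n := by
    have h1 := Subgroup.card_mul_index H
    rw [hH, Nat.card_eq_fintype_card (α := G), hcard] at h1
    omega
  have cardHf : (Finset.univ.filter (fun g : G => g ∈ H)).card = n := by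
    rw [← Fintype.card_subtype]
    rw [Nat.card_eq_fintype_card] at cardH
    exact cardH
  have cardCf : (Finset.univ.filter (fun g : G => g ∉ H)).card = n := by
    have := Finset.card_filter_add_card_filter_not
      (s := (Finset.univ : Finset G)) (p := fun g : G => g ∈ H)
    rw [Finset.card_univ, hcard, cardHf] at this
    omega
  -- injectivity of the visited-vertex sequence, given no event so far
  have injAll : ∀ k, (∀ j < k, Ok S σ τ j) → ∀ i ≤ k, ∀ j ≤ k, v i = v j → i = j := by
    intro k Hok
    have key : ∀ i j, i < j → j ≤ k → v i ≠ v j := by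
      intro i j hij hjk heq
      obtain ⟨j, rfl⟩ : ∃ j', j = j' + 1 := ⟨j - 1, by omega⟩
      have hok := Hok j (by omega)
      exact hok.2 ⟨hist σ τ i, hist_suffix σ τ (by omega),
        by rw [← hist_succ]; exact heq⟩
    intro i hi j hj heq
    rcases lt_trichotomy i j with h | h | h
    · exact absurd heq (key i j h hj)
    · exact h
    · exact absurd heq.symm (key j i h hi)
  -- parity of visited vertices
  have parAll : ∀ k, (∀ j < k, Ok S σ τ j) → ∀ j ≤ k, (v j ∈ H ↔ j % 2 = 0) := by
    intro k Hok j
    induction j with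
    | zero =>
      intro _
      simp only [hv, hist, eval, List.reverse_nil, List.prod_nil, Nat.zero_mod]
      exact iff_of_true H.one_mem trivial
    | succ j ih =>
      intro hj
      have ihj := ih (by omega)
      have hok := Hok j (by omega)
      have hm : moveAt σ τ j ∉ H := by
        have := hok.1.1
        rw [hSdef, letters_compl] at this
        exact this
      have hstep : v (j + 1) = v j * moveAt σ τ j := eval_hist_succ σ τ j
      rw [hstep, Subgroup.mul_mem_iff_of_index_two hH, ihj]
      constructor
      · intro h
        by_contra hc
        exact hm (h.mp (by omega))
      · intro h
        constructor
        · intro h2; exfalso; omega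
        · intro h2; exact (hm h2).elim
  -- the main step: at an even step Player 1's strategy keeps the game going
  have okEven : ∀ k, k % 2 = 0 → (∀ j < k, Ok S σ τ j) → Ok S σ τ k := by
    intro k hk Hok
    have inj := injAll k Hok
    have par := parAll k Hok
    -- visited vertices at odd times
    set Of : Finset G :=
      ((Finset.range (k + 1)).filter (fun j => j % 2 = 1)).image v with hOf
    set Ef : Finset G :=
      ((Finset.range (k + 1)).filter (fun j => j % 2 = 0)).image v with hEf
    have cardOfilter : ((Finset.range (k + 1)).filter (fun j => j % 2 = 1)).card = k / 2 := by
      rw [card_filter_mod 1 (by omega)]; omega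
    have cardEfilter : ((Finset.range (k + 1)).filter (fun j => j % 2 = 0)).card = k / 2 + 1 := by
      rw [card_filter_mod 0 (by omega)]; omega
    have injOn : ∀ (s : Finset ℕ), (∀ x ∈ s, x ≤ k) → Set.InjOn v s := by
      intro s hs x hx y hy hxy
      exact inj x (hs x hx) y (hs y hy) hxy
    have cardOf : Of.card = k / 2 := by
      rw [hOf, Finset.card_image_of_injOn
        (injOn _ (fun x hx => by
          simp only [Finset.mem_filter, Finset.mem_range] at hx; omega)), cardOfilter]
    have cardEf : Ef.card = k / 2 + 1 := by
      rw [hEf, Finset.card_image_of_injOn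
        (injOn _ (fun x hx => by
          simp only [Finset.mem_filter, Finset.mem_range] at hx; omega)), cardEfilter]
    have EfsubH : Ef ⊆ Finset.univ.filter (fun g : G => g ∈ H) := by
      intro g hg
      rw [hEf, Finset.mem_image] at hg
      obtain ⟨j, hj, rfl⟩ := hg
      simp only [Finset.mem_filter, Finset.mem_range] at hj
      simp only [Finset.mem_filter, Finset.mem_univ, true_and]
      exact (par j (by omega)).mpr hj.2
    have hkn : k / 2 + 1 ≤ n := by
      have := Finset.card_le_card EfsubH
      rw [cardEf, cardHf] at this
      exact this
    -- a fresh vertex in the coset exists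
    have : ¬ ((Finset.univ.filter (fun g : G => g ∉ H)) ⊆ Of) := by
      intro hsub
      have := Finset.card_le_card hsub
      rw [cardOf, cardCf] at this
      omega
    obtain ⟨w, hwC, hwO⟩ := Finset.not_subset.mp this
    have hwH : w ∉ H := by
      simpa using hwC
    have hwfresh : ∀ j ≤ k, w ≠ v j := by
      intro j hj heq
      by_cases hpar : j % 2 = 0
      · exact hwH (heq ▸ (par j hj).mpr hpar)
      · apply hwO
        rw [hOf, Finset.mem_image]
        exact ⟨j, by simp only [Finset.mem_filter, Finset.mem_range]; omega, heq.symm⟩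
    -- the witness move
    have hx : ∃ m, m ∈ S ∧ ∀ t, t <:+ hist σ τ k → eval t ≠ eval (m :: hist σ τ k) := by
      refine ⟨(v k)⁻¹ * w, ?_, ?_⟩
      · rw [hSdef]
        simp only [Set.mem_setOf_eq]
        intro hmem
        have hvk : v k ∈ H := (par k le_rfl).mpr hk
        have : v k * ((v k)⁻¹ * w) ∈ H := H.mul_mem hvk hmem
        rw [mul_inv_cancel_left] at this
        exact hwH this
      · intro t ht heq
        obtain ⟨i, hi, rfl⟩ := suffix_eq_hist σ τ k t ht
        rw [eval_cons, mul_inv_cancel_left] at heq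
        exact hwfresh i hi heq.symm
    have hg := good_spec hx
    have hmove : moveAt σ τ k = good S (hist σ τ k) := by
      rw [moveAt, if_pos hk]
    constructor
    · constructor
      · rw [hmove, hSdef, letters_compl]
        exact hg.1
      · intro p hp hmp
        rcases Nat.eq_zero_or_pos k with rfl | hkpos
        · simp [hist] at hp
        · obtain ⟨j, rfl⟩ : ∃ j', k = j' + 1 := ⟨k - 1, by omega⟩
          have hphead : moveAt σ τ j = p := by
            rw [hist_succ] at hp
            simpa using hp
          have := hg.2 (hist σ τ j) (hist_suffix σ τ (by omega))
          apply this
          rw [eval_cons, ← hmove, hmp, ← hphead]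
          rw [eval_hist_succ]
          group
    · rintro ⟨t, ht, heq⟩
      rw [hmove] at heq
      exact hg.2 t ht heq
  -- an eventful step must occur by pigeonhole
  have hne : ∃ k, ¬ Ok S σ τ k := by
    by_contra hall
    push_neg at hall
    have inj := injAll (2 * n) (fun j _ => hall j)
    have hle : (Finset.range (2 * n + 1)).card ≤ Fintype.card G := by
      rw [← Finset.card_univ]
      apply Finset.card_le_card_of_injOn v (fun _ _ => Finset.mem_univ _)
      intro i hi j hj hij
      exact inj i (by simpa [Nat.lt_succ_iff] using hi)
        j (by simpa [Nat.lt_succ_iff] using hj) hij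
    rw [Finset.card_range, hcard] at hle
    omega
  set k := Nat.find hne with hkdef
  have Hok : ∀ j < k, Ok S σ τ j := fun j hj => not_not.mp (Nat.find_min hne hj)
  have hk : ¬ Ok S σ τ k := Nat.find_spec hne
  have hodd : k % 2 = 1 := by
    by_contra h
    exact hk (okEven k (by omega) Hok)
  exact ⟨k, Hok, by omega, by
    rw [Ok] at hk
    tauto⟩
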